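/- Let Ω be a graded poset of rank n-2 on the set {1,...,m}, and let Ω⁰ be Ω with a minimum element 0 adjoined. For 1 ≤ i ≤ n let v_i be the characteristic vector of the order ideal of elements of Ω⁰ of rank at most i-1. Then v_1,...,v_n are vertices of the order polytope O(Ω), and each facet of O(Ω) contains exactly n-1 of the vectors v_1,...,v_n, i.e., they span a special simplex in O(Ω). -/

import Mathlib

/-- The dimension of a subset of `ι → ℝ`, as the rank of its vector span. -/
noncomputable def pdim {ι : Type*} (S : Set (ι → ℝ)) : ℕ :=
  Module.finrank ℝ (vectorSpan ℝ S)

/-- `F` is a face of the polytope `P`. -/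
def IsFaceOf {ι : Type*} (F P : Set (ι → ℝ)) : Prop :=
  F = P ∨ ∃ (f : (ι → ℝ) →ₗ[ℝ] ℝ) (c : ℝ), (∀ x ∈ P, f x ≤ c) ∧ F = {x ∈ P | f x = c}

/-- `F` is a facet of `P`: a nonempty proper face of codimension one. -/
def IsFacetOf {ι : Type*} (F P : Set (ι → ℝ)) : Prop :=
  IsFaceOf F P ∧ F.Nonempty ∧ F ≠ P ∧ pdim F + 1 = pdim P

/-- The order polytope `O(Ω)` of a poset `Ω` (given by the relation `le` on `Fin m`),
inside the hyperplane `x 0 = 1` of `ℝ^{m+1}`: here coordinate `0` corresponds to the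
adjoined minimum element `0` of `Ω⁰`. -/
def orderPolytope (m : ℕ) (le : Fin m → Fin m → Prop) : Set (Fin (m + 1) → ℝ) :=
  {x | x 0 = 1 ∧ (∀ a, 0 ≤ x a) ∧ (∀ j : Fin m, x j.succ ≤ x 0) ∧
    ∀ i j : Fin m, le i j → x j.succ ≤ x i.succ}

/-- The characteristic vector of the order ideal of elements of `Ω⁰` of rank at most `i`
(that is, of rank at most `i - 1` for the 1-based index `i + 1`), where the element `k`
of `Ω` with rank function value `rk k` has rank `rk k + 1` in `Ω⁰` and the adjoined
minimum has rank `0`. -/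
def idealVec (m n : ℕ) (rk : Fin m → ℕ) (i : Fin n) : Fin (m + 1) → ℝ :=
  Fin.cons 1 (fun j => if rk j + 1 ≤ (i : ℕ) then 1 else 0)

/-!
The vectors `v_k` are `0/1`-points of `O(Ω)`, which lies in the unit cube, so they are vertices.
For a facet `F = O(Ω) ∩ {f = c}`, some defining inequality of `O(Ω)` is tight on all of `F`:
otherwise averaging gives a point `z ∈ F` where all of them are strict, and then for every
`x ∈ O(Ω)` a point `z + ε (z - x)` still lies in `O(Ω)`, which forces `f x = c` and `F = O(Ω)`.
Following the order, a tight `x_{a+1} = 0` moves up to a maximal element, a tight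
`x_0 = x_{j+1}` down to a minimal one, and a tight `x_{i+1} = x_{j+1}` to a cover of `i`. Since
`F` has codimension one, it is the whole face cut out by this covering equation `x_p = x_q`
(with `x_q = 0` for a maximal `p`), and `v_{k+1}` satisfies it unless `k` is the rank of `p`
in `Ω⁰`.
-/

open Module Topology

theorem finrank_ker_inf_ker_add_two_le {K V : Type*} [Field K] [AddCommGroup V] [Module K V]
    [FiniteDimensional K V] {φ ψ : V →ₗ[K] K} {u w : V} (hu : φ u ≠ 0) (hφw : φ w = 0)
    (hψw : ψ w ≠ 0) :
    finrank K (LinearMap.ker φ ⊓ LinearMap.ker ψ : Submodule K V) + 2 ≤ finrank K V := by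
  have h₁ : LinearMap.ker φ ⊓ LinearMap.ker ψ < LinearMap.ker φ :=
    SetLike.lt_iff_le_and_exists.2 ⟨inf_le_left, w, hφw, fun h => hψw h.2⟩
  have h₂ : LinearMap.ker φ ≠ ⊤ := fun h => hu (h ▸ Submodule.mem_top : u ∈ LinearMap.ker φ)
  have := Submodule.finrank_lt_finrank_of_lt h₁
  have := Submodule.finrank_lt h₂
  omega

abbrev IsPartialOrder.toPartialOrder {α : Type*} (le : α → α → Prop) [IsPartialOrder α le] :
    PartialOrder α where
  le := le
  le_refl := refl_of le
  le_trans _ _ _ := trans_of le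
  le_antisymm _ _ := antisymm_of le

section Relation

variable {α : Type*} [Finite α] {le : α → α → Prop} [IsPartialOrder α le]

theorem exists_rel_maximal (a : α) : ∃ b, le a b ∧ ∀ c, le b c → c = b := by
  let _ := IsPartialOrder.toPartialOrder le
  obtain ⟨b, hab, hb⟩ := Finite.exists_le_maximal (p := fun _ => True) (a := a) trivial
  exact ⟨b, hab, fun c hbc => le_antisymm (hb.2 trivial hbc) hbc⟩

theorem exists_rel_minimal (a : α) : ∃ b, le b a ∧ ∀ c, le c b → c = b :=
  exists_rel_maximal (le := Function.swap le) a

theorem exists_cover_rel {i j : α} (hij : le i j) (hne : i ≠ j) :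
    ∃ c, le c j ∧ le i c ∧ i ≠ c ∧ ∀ d, le i d → le d c → d = i ∨ d = c := by
  let _ := IsPartialOrder.toPartialOrder le
  obtain ⟨c, hic, hcj⟩ := exists_covBy_le_of_lt (lt_of_le_of_ne hij hne)
  obtain ⟨hlt, hc⟩ := covBy_iff_lt_and_eq_or_eq.1 hic
  exact ⟨c, hcj, hlt.le, hlt.ne, hc⟩

theorem rel_monotone_of_cover_add_one {rk : α → ℕ}
    (hcov : ∀ i j, le i j → i ≠ j → (∀ c, le i c → le c j → c = i ∨ c = j) →
      rk j = rk i + 1) : ∀ i j, le i j → rk i ≤ rk j := by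
  classical
  let _ := IsPartialOrder.toPartialOrder le
  have := Fintype.ofFinite α
  let _ := Fintype.toLocallyFiniteOrder (α := α)
  refine fun i j hij => (monotone_iff_forall_covBy rk).2 (fun a b hab => ?_) hij
  obtain ⟨hlt, hc⟩ := covBy_iff_lt_and_eq_or_eq.1 hab
  rw [hcov a b hlt.le hlt.ne hc]
  exact Nat.le_succ _

theorem le_of_forall_rel_maximal_eq {rk : α → ℕ} {r : ℕ} (hmono : ∀ i j, le i j → rk i ≤ rk j)
    (hmax : ∀ i, (∀ j, le i j → j = i) → rk i = r) (i : α) : rk i ≤ r := by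
  obtain ⟨b, hib, hb⟩ := exists_rel_maximal (le := le) i
  exact (hmono i b hib).trans (hmax b hb).le

end Relation

section Polyhedron

variable {E : Type*} [AddCommGroup E] [Module ℝ E]

theorem vectorSpan_le_ker_of_forall_eq {S : Set E} {f : E →ₗ[ℝ] ℝ} {c : ℝ}
    (hf : ∀ x ∈ S, f x = c) : vectorSpan ℝ S ≤ LinearMap.ker f := by
  rw [vectorSpan_def, Submodule.span_le]
  rintro _ ⟨x, hx, y, hy, rfl⟩
  simp [hf x hx, hf y hy]

theorem forall_eq_of_finrank_vectorSpan_le [FiniteDimensional ℝ E] {F G : Set E}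
    {f : E →ₗ[ℝ] ℝ} {c : ℝ} (hFG : F ⊆ G) (hF : F.Nonempty) (hf : ∀ x ∈ F, f x = c)
    (hdim : finrank ℝ (vectorSpan ℝ G) ≤ finrank ℝ (vectorSpan ℝ F)) :
    ∀ x ∈ G, f x = c := by
  obtain ⟨p, hp⟩ := hF
  have hspan : vectorSpan ℝ F = vectorSpan ℝ G :=
    Submodule.eq_of_le_of_finrank_le (vectorSpan_mono ℝ hFG) hdim
  intro x hx
  have hxp : x -ᵥ p ∈ vectorSpan ℝ F := hspan ▸ vsub_mem_vectorSpan ℝ hx (hFG hp)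
  have := vectorSpan_le_ker_of_forall_eq hf hxp
  rw [LinearMap.mem_ker, vsub_eq_sub, map_sub, hf p hp, sub_eq_zero] at this
  exact this

variable {σ : Type*} [Finite σ]

theorem Convex.exists_forall_pos {F : Set E} (hF : Convex ℝ F) (hne : F.Nonempty)
    (ℓ : σ → E →ₗ[ℝ] ℝ) (hnonneg : ∀ s, ∀ x ∈ F, 0 ≤ ℓ s x)
    (hpos : ∀ s, ∃ x ∈ F, 0 < ℓ s x) : ∃ z ∈ F, ∀ s, 0 < ℓ s z := by
  classical
  have := Fintype.ofFinite σ
  suffices ∀ t : Finset σ, ∃ z ∈ F, ∀ s ∈ t, 0 < ℓ s z by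
    simpa using this Finset.univ
  intro t
  induction t using Finset.induction with
  | empty =>
    obtain ⟨z, hz⟩ := hne
    exact ⟨z, hz, by simp⟩
  | insert s t _ ih =>
    obtain ⟨z, hz, hzt⟩ := ih
    obtain ⟨w, hw, hws⟩ := hpos s
    refine ⟨(1 / 2 : ℝ) • z + (1 / 2 : ℝ) • w, hF hz hw (by norm_num) (by norm_num) (by norm_num),
      fun s' hs' => ?_⟩
    have hz' := hnonneg s' z hz
    have hw' := hnonneg s' w hw
    simp only [map_add, map_smul, smul_eq_mul]
    rcases Finset.mem_insert.1 hs' with rfl | hs'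
    · linarith
    · linarith [hzt s' hs']

theorem exists_pos_lineMap_mem {A : AffineSubspace ℝ E} {ℓ : σ → E →ₗ[ℝ] ℝ} {x z : E}
    (hx : x ∈ A) (hz : z ∈ A) (hzpos : ∀ s, 0 < ℓ s z) :
    ∃ ε : ℝ, 0 < ε ∧ AffineMap.lineMap x z (1 + ε) ∈ A ∧
      ∀ s, 0 ≤ ℓ s (AffineMap.lineMap x z (1 + ε)) := by
  have hnear : ∀ᶠ ε in 𝓝 (0 : ℝ), ∀ s, 0 < ℓ s (AffineMap.lineMap x z (1 + ε)) := by
    refine Filter.eventually_all.2 fun s => ?_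
    have hcont : Continuous fun ε : ℝ => ℓ s (AffineMap.lineMap x z (1 + ε)) := by
      simp only [AffineMap.lineMap_apply_module', map_add, map_smul, smul_eq_mul]
      fun_prop
    refine continuousAt_const.eventually_lt hcont.continuousAt ?_
    simpa using hzpos s
  obtain ⟨ε, hε, hεpos⟩ :=
    ((hnear.filter_mono nhdsWithin_le_nhds).and self_mem_nhdsWithin).exists (f := 𝓝[>] 0)
  exact ⟨ε, hεpos, AffineMap.lineMap_mem _ hx hz, fun s => (hε s).le⟩

theorem exists_forall_eq_zero_of_face_ne {A : AffineSubspace ℝ E} {ℓ : σ → E →ₗ[ℝ] ℝ}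
    {P : Set E} (hP : ∀ x, x ∈ P ↔ x ∈ A ∧ ∀ s, 0 ≤ ℓ s x) {f : E →ₗ[ℝ] ℝ} {c : ℝ}
    (hfc : ∀ x ∈ P, f x ≤ c) (hne : {x ∈ P | f x = c}.Nonempty)
    (hproper : {x ∈ P | f x = c} ≠ P) : ∃ s, ∀ x ∈ P, f x = c → ℓ s x = 0 := by
  by_contra! h
  have hconv : Convex ℝ {x ∈ P | f x = c} := by
    rintro x ⟨hx, hxc⟩ y ⟨hy, hyc⟩ a b ha hb hab
    rw [hP] at hx hy
    refine ⟨(hP _).2 ⟨A.convex hx.1 hy.1 ha hb hab, fun s => ?_⟩, ?_⟩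
    · simpa using add_nonneg (mul_nonneg ha (hx.2 s)) (mul_nonneg hb (hy.2 s))
    · simp [hxc, hyc, ← add_mul, hab]
  obtain ⟨z, ⟨hzP, hzc⟩, hz⟩ := hconv.exists_forall_pos hne ℓ
    (fun s x hx => ((hP x).1 hx.1).2 s) fun s => by
      obtain ⟨x, hx, hxc, hxs⟩ := h s
      exact ⟨x, ⟨hx, hxc⟩, (((hP x).1 hx).2 s).lt_of_ne' hxs⟩
  refine hproper (Set.Subset.antisymm (fun x hx => hx.1) fun x hx => ⟨hx, ?_⟩)
  obtain ⟨ε, hε, hyA, hy⟩ := exists_pos_lineMap_mem ((hP x).1 hx).1 ((hP z).1 hzP).1 hz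
  have hfy := hfc _ ((hP _).2 ⟨hyA, hy⟩)
  rw [AffineMap.lineMap_apply_module', map_add, map_smul, map_sub, hzc, smul_eq_mul] at hfy
  nlinarith [hfc x hx]

end Polyhedron

theorem IsFaceOf.subset {ι : Type*} {F P : Set (ι → ℝ)} (h : IsFaceOf F P) : F ⊆ P := by
  rcases h with rfl | ⟨f, c, -, rfl⟩
  exacts [subset_rfl, Set.sep_subset _ _]

section OrderPolytope

variable {m n : ℕ} {le : Fin m → Fin m → Prop}

/-- Pairs with `i = j` are left out: their inequality is tight everywhere. -/
def orderIneq (le : Fin m → Fin m → Prop) :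
    Fin m ⊕ Fin m ⊕ {p : Fin m × Fin m // le p.1 p.2 ∧ p.1 ≠ p.2} →
      (Fin (m + 1) → ℝ) →ₗ[ℝ] ℝ
  | .inl a => LinearMap.proj a.succ
  | .inr (.inl j) => (LinearMap.proj 0 : (Fin (m + 1) → ℝ) →ₗ[ℝ] ℝ) - LinearMap.proj j.succ
  | .inr (.inr p) =>
    (LinearMap.proj p.1.1.succ : (Fin (m + 1) → ℝ) →ₗ[ℝ] ℝ) - LinearMap.proj p.1.2.succ

theorem mem_orderPolytope_iff {x : Fin (m + 1) → ℝ} :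
    x ∈ orderPolytope m le ↔
      x ∈ AffineSubspace.mk' (Pi.single 0 1 : Fin (m + 1) → ℝ)
          (LinearMap.ker (LinearMap.proj 0 : (Fin (m + 1) → ℝ) →ₗ[ℝ] ℝ)) ∧
        ∀ s, 0 ≤ orderIneq le s x := by
  simp only [AffineSubspace.mem_mk', vsub_eq_sub, LinearMap.mem_ker, LinearMap.proj_apply,
    Pi.sub_apply, Pi.single_eq_same, sub_eq_zero]
  constructor
  · rintro ⟨h0, hnn, htop, hle⟩
    refine ⟨h0, ?_⟩
    rintro (a | j | ⟨⟨i, j⟩, hij, -⟩)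
    · exact hnn a.succ
    · simpa [orderIneq] using htop j
    · simpa [orderIneq] using hle i j hij
  · rintro ⟨h0, h⟩
    refine ⟨h0, Fin.cases (by simp [h0]) fun a => by simpa [orderIneq] using h (.inl a),
      fun j => by simpa [orderIneq] using h (.inr (.inl j)), fun i j hij => ?_⟩
    rcases eq_or_ne i j with rfl | hne
    · rfl
    · simpa [orderIneq] using h (.inr (.inr ⟨(i, j), hij, hne⟩))

theorem cons_indicator_mem_orderPolytope {I : Fin m → Prop} [DecidablePred I]
    (hI : ∀ i j, le i j → I j → I i) :
    (Fin.cons 1 fun j => if I j then 1 else 0 : Fin (m + 1) → ℝ) ∈ orderPolytope m le := by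
  refine ⟨rfl, fun a => ?_, fun j => ?_, fun i j hij => ?_⟩
  · cases a using Fin.cases <;> simp only [Fin.cons_zero, Fin.cons_succ] <;> positivity
  · simp only [Fin.cons_succ, Fin.cons_zero]; split_ifs <;> norm_num
  · by_cases hj : I j
    · simp [hj, hI i j hij hj]
    · simp only [Fin.cons_succ, hj, if_false]; split_ifs <;> norm_num

theorem idealVec_mem_orderPolytope {rk : Fin m → ℕ} (hmono : ∀ i j, le i j → rk i ≤ rk j)
    (k : Fin n) : idealVec m n rk k ∈ orderPolytope m le :=
  cons_indicator_mem_orderPolytope fun i j hij h => (Nat.succ_le_succ (hmono i j hij)).trans h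

theorem orderPolytope_subset_pi_Icc :
    orderPolytope m le ⊆ Set.univ.pi fun _ => Set.Icc 0 1 := by
  rintro x ⟨h0, hnn, htop, -⟩ a -
  exact ⟨hnn a, Fin.cases h0.le (fun j => h0 ▸ htop j) a⟩

theorem idealVec_mem_extremePoints {rk : Fin m → ℕ} (hmono : ∀ i j, le i j → rk i ≤ rk j)
    (k : Fin n) : idealVec m n rk k ∈ Set.extremePoints ℝ (orderPolytope m le) := by
  refine inter_extremePoints_subset_extremePoints_of_subset orderPolytope_subset_pi_Icc
    ⟨idealVec_mem_orderPolytope hmono k, ?_⟩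
  rw [extremePoints_pi]
  intro a _
  rw [Set.extremePoints_Icc zero_le_one]
  cases a using Fin.cases
  · simp [idealVec]
  · simp only [idealVec, Fin.cons_succ]
    split_ifs <;> simp

theorem single_succ_mem_vectorSpan_orderPolytope [IsPartialOrder (Fin m) le] (j : Fin m) :
    Pi.single j.succ 1 ∈ vectorSpan ℝ (orderPolytope m le) := by
  classical
  have hbelow := cons_indicator_mem_orderPolytope (le := le) (I := fun k => le k j)
    fun a b hab hbj => trans_of le hab hbj
  have hbelow' := cons_indicator_mem_orderPolytope (le := le) (I := fun k => le k j ∧ k ≠ j)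
    fun a b hab ⟨hbj, hne⟩ => ⟨trans_of le hab hbj, by
      rintro rfl; exact hne (antisymm_of le hbj hab)⟩
  convert vsub_mem_vectorSpan ℝ hbelow hbelow' using 1
  ext k
  cases k using Fin.cases with
  | zero => simp
  | succ k =>
    rcases eq_or_ne k j with rfl | hne
    · simp [refl_of le k]
    · simp [hne]

theorem le_pdim_orderPolytope [IsPartialOrder (Fin m) le] : m ≤ pdim (orderPolytope m le) := by
  have hli : LinearIndependent ℝ fun j : Fin m => (Pi.single j.succ 1 : Fin (m + 1) → ℝ) :=
    (Pi.linearIndependent_single_one (Fin (m + 1)) ℝ).comp _ (Fin.succ_injective m)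
  calc m = finrank ℝ (Submodule.span ℝ
        (Set.range fun j : Fin m => (Pi.single j.succ 1 : Fin (m + 1) → ℝ))) := by
        rw [finrank_span_eq_card hli, Fintype.card_fin]
    _ ≤ pdim (orderPolytope m le) := Submodule.finrank_mono <| Submodule.span_le.2 <|
        Set.range_subset_iff.2 single_succ_mem_vectorSpan_orderPolytope

end OrderPolytope

section Facets

variable {m n : ℕ} {le : Fin m → Fin m → Prop} {rk : Fin m → ℕ} {F : Set (Fin (m + 1) → ℝ)}

theorem IsFacetOf.exists_orderIneq_eq_zero (hF : IsFacetOf F (orderPolytope m le)) :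
    ∃ s, ∀ x ∈ F, orderIneq le s x = 0 := by
  obtain ⟨hface, hne, hproper, -⟩ := hF
  rcases hface with rfl | ⟨f, c, hfc, rfl⟩
  · exact absurd rfl hproper
  obtain ⟨s, hs⟩ := exists_forall_eq_zero_of_face_ne (fun x => mem_orderPolytope_iff) hfc hne
    hproper
  exact ⟨s, fun x hx => hs x hx.1 hx.2⟩

theorem IsFacetOf.eq_sep_orderPolytope [IsPartialOrder (Fin m) le]
    (hF : IsFacetOf F (orderPolytope m le)) {g : (Fin (m + 1) → ℝ) →ₗ[ℝ] ℝ} {j : Fin m}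
    (hgj : g (Pi.single j.succ 1) ≠ 0) (hFg : ∀ x ∈ F, g x = 0) :
    F = {x ∈ orderPolytope m le | g x = 0} := by
  obtain ⟨hface, hne, hproper, hdim⟩ := hF
  rcases hface with rfl | ⟨f, c, -, rfl⟩
  · exact absurd rfl hproper
  set G := {x ∈ orderPolytope m le | g x = 0}
  have hFG : {x ∈ orderPolytope m le | f x = c} ⊆ G := fun x hx => ⟨hx.1, hFg x hx⟩
  have hGdim : finrank ℝ (vectorSpan ℝ G) + 2 ≤ m + 1 := by
    have hker := le_inf (vectorSpan_le_ker_of_forall_eq (f := LinearMap.proj 0) (c := 1)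
      fun x (hx : x ∈ G) => hx.1.1) (vectorSpan_le_ker_of_forall_eq fun x (hx : x ∈ G) => hx.2)
    have := finrank_ker_inf_ker_add_two_le (u := Pi.single 0 1) (w := Pi.single j.succ 1)
      (φ := LinearMap.proj 0) (by simp) (by simp [Fin.succ_ne_zero]) hgj
    rw [finrank_fin_fun] at this
    linarith [Submodule.finrank_mono hker]
  have hPdim : m ≤ pdim (orderPolytope m le) := le_pdim_orderPolytope
  unfold pdim at hdim hPdim
  have hGF := forall_eq_of_finrank_vectorSpan_le hFG hne (fun x hx => hx.2) (by omega)
  exact Set.Subset.antisymm hFG fun x hx => ⟨hx.1, hGF x hx⟩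

theorem card_subtype_val_ne (t : ℕ) (ht : t < n) :
    Nat.card {k : Fin n // (k : ℕ) ≠ t} = n - 1 := by
  rw [← Nat.card_congr (Equiv.subtypeEquivRight fun k : Fin n => (Fin.ext_iff (b := ⟨t, ht⟩)).not)]
  simp

theorem IsFacetOf.card_idealVec_mem [IsPartialOrder (Fin m) le]
    (hmono : ∀ i j, le i j → rk i ≤ rk j)
    (hF : IsFacetOf F (orderPolytope m le)) {g : (Fin (m + 1) → ℝ) →ₗ[ℝ] ℝ} {j : Fin m}
    (hgj : g (Pi.single j.succ 1) ≠ 0) (hFg : ∀ x ∈ F, g x = 0) {t : ℕ} (ht : t < n)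
    (hgt : ∀ k : Fin n, g (idealVec m n rk k) = 0 ↔ (k : ℕ) ≠ t) :
    Nat.card {k : Fin n // idealVec m n rk k ∈ F} = n - 1 := by
  rw [← card_subtype_val_ne t ht, hF.eq_sep_orderPolytope hgj hFg]
  exact Nat.card_congr (Equiv.subtypeEquivRight fun k => by
    simp [idealVec_mem_orderPolytope hmono k, hgt])

theorem IsFacetOf.card_idealVec_mem_of_coord_eq_zero [IsPartialOrder (Fin m) le] (hn : 2 ≤ n)
    (hmax : ∀ i, (∀ j, le i j → j = i) → rk i = n - 2)
    (hmono : ∀ i j, le i j → rk i ≤ rk j) (hF : IsFacetOf F (orderPolytope m le)) {a : Fin m}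
    (ha : ∀ x ∈ F, x a.succ = 0) :
    Nat.card {k : Fin n // idealVec m n rk k ∈ F} = n - 1 := by
  obtain ⟨b, hab, hb⟩ := exists_rel_maximal (le := le) a
  refine hF.card_idealVec_mem hmono (g := LinearMap.proj b.succ) (j := b) (by simp)
    (fun x hx => ?_) (t := n - 1) (by omega) fun k => ?_
  · obtain ⟨-, hnn, -, hle⟩ := hF.1.subset hx
    exact le_antisymm (ha x hx ▸ hle a b hab) (hnn _)
  · have := k.isLt
    simp only [LinearMap.proj_apply, idealVec, Fin.cons_succ, hmax b hb]
    split_ifs <;> simp <;> omega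

theorem IsFacetOf.card_idealVec_mem_of_coord_eq_coord_zero [IsPartialOrder (Fin m) le]
    (hn : 0 < n) (hmin : ∀ i, (∀ j, le j i → j = i) → rk i = 0)
    (hmono : ∀ i j, le i j → rk i ≤ rk j) (hF : IsFacetOf F (orderPolytope m le)) {j : Fin m}
    (hj : ∀ x ∈ F, x 0 = x j.succ) :
    Nat.card {k : Fin n // idealVec m n rk k ∈ F} = n - 1 := by
  obtain ⟨i, hij, hi⟩ := exists_rel_minimal (le := le) j
  refine hF.card_idealVec_mem hmono (j := i)
    (g := (LinearMap.proj 0 : (Fin (m + 1) → ℝ) →ₗ[ℝ] ℝ) - LinearMap.proj i.succ)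
    (by simp [Fin.succ_ne_zero]) (fun x hx => ?_) (t := 0) (by omega) fun k => ?_
  · obtain ⟨-, -, htop, hle⟩ := hF.1.subset hx
    have := hle i j hij
    have := htop i
    simp only [LinearMap.sub_apply, LinearMap.proj_apply]
    linarith [hj x hx]
  · simp only [LinearMap.sub_apply, LinearMap.proj_apply, idealVec, Fin.cons_zero, Fin.cons_succ,
      hmin i hi]
    split_ifs <;> simp <;> omega

theorem IsFacetOf.card_idealVec_mem_of_coord_eq_coord [IsPartialOrder (Fin m) le]
    (hmax : ∀ i, (∀ j, le i j → j = i) → rk i = n - 2)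
    (hcov : ∀ i j, le i j → i ≠ j → (∀ c, le i c → le c j → c = i ∨ c = j) →
      rk j = rk i + 1)
    (hF : IsFacetOf F (orderPolytope m le)) {i j : Fin m} (hij : le i j) (hne : i ≠ j)
    (hF_eq : ∀ x ∈ F, x i.succ = x j.succ) :
    Nat.card {k : Fin n // idealVec m n rk k ∈ F} = n - 1 := by
  have hmono := rel_monotone_of_cover_add_one hcov
  obtain ⟨c, hcj, hic, hic_ne, hcover⟩ := exists_cover_rel hij hne
  have hrkc := hcov i c hic hic_ne hcover
  have hrkc_le := le_of_forall_rel_maximal_eq hmono hmax c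
  refine hF.card_idealVec_mem hmono (j := c)
    (g := (LinearMap.proj i.succ : (Fin (m + 1) → ℝ) →ₗ[ℝ] ℝ) - LinearMap.proj c.succ)
    (by simp [Fin.succ_inj, hic_ne]) (fun x hx => ?_) (t := rk i + 1)
    (by omega) fun k => ?_
  · obtain ⟨-, -, -, hle⟩ := hF.1.subset hx
    have := hle i c hic
    have := hle c j hcj
    simp only [LinearMap.sub_apply, LinearMap.proj_apply]
    linarith [hF_eq x hx]
  · simp only [LinearMap.sub_apply, LinearMap.proj_apply, idealVec, Fin.cons_succ, hrkc]
    split_ifs <;> simp <;> omega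

end Facets

theorem rank_ideals_special_simplex_general {m n : ℕ} (hn : 2 ≤ n)
    (le : Fin m → Fin m → Prop)
    (hrefl : ∀ i, le i i)
    (hantisymm : ∀ i j, le i j → le j i → i = j)
    (htrans : ∀ i j k, le i j → le j k → le i k)
    (rk : Fin m → ℕ)
    (hmin : ∀ i, (∀ j, le j i → j = i) → rk i = 0)
    (hmax : ∀ i, (∀ j, le i j → j = i) → rk i = n - 2)
    (hcov : ∀ i j, le i j → i ≠ j → (∀ c, le i c → le c j → c = i ∨ c = j) →
      rk j = rk i + 1) :
    (∀ i : Fin n, idealVec m n rk i ∈ Set.extremePoints ℝ (orderPolytope m le)) ∧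
    ∀ F, IsFacetOf F (orderPolytope m le) →
      Nat.card {i : Fin n // idealVec m n rk i ∈ F} = n - 1 := by
  have : IsPartialOrder (Fin m) le :=
    { refl := hrefl, trans := htrans, antisymm := hantisymm }
  have hmono := rel_monotone_of_cover_add_one hcov
  refine ⟨idealVec_mem_extremePoints hmono, fun F hF => ?_⟩
  obtain ⟨s, hs⟩ := hF.exists_orderIneq_eq_zero
  rcases s with a | j | ⟨⟨i, j⟩, hij, hne⟩
  · exact hF.card_idealVec_mem_of_coord_eq_zero hn hmax hmono fun x hx => by
      simpa [orderIneq] using hs x hx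
  · exact hF.card_idealVec_mem_of_coord_eq_coord_zero (by omega) hmin hmono fun x hx => by
      simpa [orderIneq, sub_eq_zero] using hs x hx
  · exact hF.card_idealVec_mem_of_coord_eq_coord hmax hcov hij hne fun x hx => by
      simpa [orderIneq, sub_eq_zero] using hs x hx

/-- For a graded poset `Ω` of rank `n - 2` on `{1, …, m}`, the characteristic vectors of
the rank ideals of `Ω⁰` are vertices of the order polytope `O(Ω)` and every facet of
`O(Ω)` contains exactly `n - 1` of them: they span a special simplex. -/
theorem rank_ideals_special_simplex {m n : ℕ} (hm : 1 ≤ m) (hn : 2 ≤ n)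
    (le : Fin m → Fin m → Prop)
    (hrefl : ∀ i, le i i)
    (hantisymm : ∀ i j, le i j → le j i → i = j)
    (htrans : ∀ i j k, le i j → le j k → le i k)
    (rk : Fin m → ℕ)
    (hmin : ∀ i, (∀ j, le j i → j = i) → rk i = 0)
    (hmax : ∀ i, (∀ j, le i j → j = i) → rk i = n - 2)
    (hcov : ∀ i j, le i j → i ≠ j → (∀ c, le i c → le c j → c = i ∨ c = j) →
      rk j = rk i + 1) :
    (∀ i : Fin n, idealVec m n rk i ∈ Set.extremePoints ℝ (orderPolytope m le)) ∧
    ∀ F, IsFacetOf F (orderPolytope m le) →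
      Nat.card {i : Fin n // idealVec m n rk i ∈ F} = n - 1 :=
  rank_ideals_special_simplex_general hn le hrefl hantisymm htrans rk hmin hmax hcov
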